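/- Let F be an algebraically closed field of characteristic zero, let L be a Lie algebra over F with a nontrivial finite-dimensional Cartan subalgebra H such that L = ⊕_{α∈R} L_α is the direct sum of its root spaces with L_0 = H, let N ≥ 3 be an integer, and let φ be an N-derivation of L of homogeneous degree γ ∈ H* with γ ≠ 0. Then for any h_γ ∈ H with γ(h_γ) = 1, one has φ(h) = −[φ(h_γ), h] for all h ∈ H; equivalently, the N-derivation ψ := φ + ad(φ(h_γ)) vanishes identically on H. -/
import Mathlib


open scoped BigOperators Classical

/-- Right-iterated Lie bracket `[x₁, x₂, …, xₖ] = [x₁, [x₂, [… [x_{k-1}, xₖ] …]]]`. -/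
def itBracket {L : Type*} [LieRing L] : List L → L
  | [] => 0
  | [a] => a
  | a :: b :: l => ⁅a, itBracket (b :: l)⁆

/-- `φ` is an `N`-derivation of the Lie algebra `L`:
`φ [x₁, …, x_N] = ∑ i, [x₁, …, x_{i-1}, φ xᵢ, x_{i+1}, …, x_N]`. -/
def IsNDeriv (F : Type*) {L : Type*} [CommRing F] [LieRing L] [LieAlgebra F L]
    (N : ℕ) (φ : L →ₗ[F] L) : Prop :=
  ∀ x : Fin N → L,
    φ (itBracket (List.ofFn x)) =
      ∑ i : Fin N, itBracket (List.ofFn (Function.update x i (φ (x i))))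

/-- The root space `L_α = { x ∈ L | [h, x] = α(h) • x for all h ∈ H }` attached to a linear
functional `α` on a Lie subalgebra `H` of `L`. -/
def rootSp (F : Type*) {L : Type*} [CommRing F] [LieRing L] [LieAlgebra F L]
    (H : LieSubalgebra F L) (α : Module.Dual F H) : Submodule F L where
  carrier := {x : L | ∀ h : H, ⁅(h : L), x⁆ = α h • x}
  add_mem' := by
    intro a b ha hb h
    rw [lie_add, ha h, hb h, smul_add]
  zero_mem' := by intro h; simp
  smul_mem' := by
    intro c a ha h
    rw [lie_smul, ha h, smul_comm]

lemma itBracket_cons {L : Type*} [LieRing L] (a : L) (l : List L) (hl : l ≠ []) :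
    itBracket (a :: l) = ⁅a, itBracket l⁆ := by
  cases l with
  | nil => exact absurd rfl hl
  | cons b t => rfl

lemma itBracket_eq_zero_of_pairwise {L : Type*} [LieRing L] (l : List L)
    (h2 : 2 ≤ l.length) (hl : ∀ a ∈ l, ∀ b ∈ l, ⁅a, b⁆ = 0) : itBracket l = 0 := by
  induction l with
  | nil => simp at h2
  | cons a t ih =>
    cases t with
    | nil => simp at h2
    | cons b s =>
      cases s with
      | nil =>
        show ⁅a, b⁆ = 0
        exact hl a (by simp) b (by simp)
      | cons c u =>
        rw [itBracket_cons _ _ (by simp),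
          ih (by simp) (fun p hp q hq => hl p (by simp [hp]) q (by simp [hq]))]
        simp

lemma itBracket_append_zero {L : Type*} [LieRing L] (m l : List L) (hl : l ≠ [])
    (h0 : itBracket l = 0) : itBracket (m ++ l) = 0 := by
  induction m with
  | nil => simpa
  | cons a t ih =>
    rw [List.cons_append, itBracket_cons _ _ (by simp [hl]), ih]
    simp

lemma itBracket_append_rootSp (F : Type*) {L : Type*} [Field F] [LieRing L] [LieAlgebra F L]
    (H : LieSubalgebra F L) (γ : Module.Dual F H) (m : List H) (l : List L) (hl : l ≠ [])
    (hv : itBracket l ∈ rootSp F H γ) :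
    itBracket ((m.map (fun z : H => (z : L))) ++ l) = (m.map γ).prod • itBracket l := by
  induction m with
  | nil => simp
  | cons a t ih =>
    rw [List.map_cons, List.cons_append, itBracket_cons _ _ (by simp [hl]), ih, lie_smul,
      hv a, List.map_cons, List.prod_cons, mul_smul, smul_comm]

/-- Let `L` be a Lie algebra over an algebraically closed field of characteristic zero, graded
by a nontrivial finite-dimensional Cartan subalgebra `H` (so `L = ⊕_α L_α` with `L_0 = H`),
let `N ≥ 3`, and let `φ` be an `N`-derivation of `L` of homogeneous degree `γ ≠ 0`.  Then for
any `h_γ ∈ H` with `γ h_γ = 1` one has `φ h = -[φ h_γ, h]` for all `h ∈ H`; equivalently,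
the `N`-derivation `ψ := φ + ad (φ h_γ)` vanishes identically on `H`. -/
theorem nDeriv_degNeZero_on_cartan (F L : Type*) [Field F] [IsAlgClosed F] [CharZero F] [LieRing L] [LieAlgebra F L]
    (H : LieSubalgebra F L) [H.IsCartanSubalgebra] [FiniteDimensional F H] (hH : H ≠ ⊥)
    (hdec : DirectSum.IsInternal (fun α : Module.Dual F H => rootSp F H α))
    (hzero : rootSp F H (0 : Module.Dual F H) = H.toSubmodule)
    (N : ℕ) (hN : 3 ≤ N) (γ : Module.Dual F H) (hγ0 : γ ≠ 0)
    (φ : L →ₗ[F] L) (hφ : IsNDeriv F N φ)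
    (hdeg : ∀ α : Module.Dual F H, ∀ x ∈ rootSp F H α, φ x ∈ rootSp F H (α + γ))
    (hγ : H) (hhγ : γ hγ = 1) :
    ∀ h : H, φ (h : L) = -⁅φ (hγ : L), (h : L)⁆ := by
  intro h
  have hmemH : ∀ z : H, (z : L) ∈ rootSp F H 0 := by
    intro z; rw [hzero]; exact z.2
  have habelian : ∀ a b : H, ⁅(a : L), (b : L)⁆ = 0 := by
    intro a b
    have := hmemH b a
    simpa using this
  have hφγ : ∀ z : H, φ (z : L) ∈ rootSp F H γ := by
    intro z
    have := hdeg 0 _ (hmemH z)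
    simpa using this
  have hbr : ∀ z w : H, ⁅(z : L), φ (w : L)⁆ = γ z • φ (w : L) := fun z w => hφγ w z
  set y : Fin N → H := fun i => if i.val = N - 1 then h else hγ with hy
  set x : Fin N → L := fun i => ((y i : L)) with hx
  have hxn : ∀ (n : ℕ) (hn : n < N), x ⟨n, hn⟩ = if n = N - 1 then (h : L) else (hγ : L) := by
    intro n hn
    simp only [hx, hy]
    by_cases h1 : n = N - 1
    · rw [if_pos h1, if_pos h1]
    · rw [if_neg h1, if_neg h1]
  have key := hφ x
  have hofn : List.ofFn x = (List.ofFn y).map (fun z : H => (z : L)) := by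
    rw [List.map_ofFn]; rfl
  have hLHS : itBracket (List.ofFn x) = 0 := by
    apply itBracket_eq_zero_of_pairwise
    · simp only [List.length_ofFn]; omega
    · intro a ha b hb
      rw [hofn] at ha hb
      obtain ⟨a', -, rfl⟩ := List.mem_map.1 ha
      obtain ⟨b', -, rfl⟩ := List.mem_map.1 hb
      exact habelian a' b'
  rw [hLHS, map_zero] at key
  -- the list identity for each term
  have hlist : ∀ (i : Fin N) (c : L), List.ofFn (Function.update x i c) =
      (List.replicate i.val hγ).map (fun z : H => (z : L)) ++ c ::
        (if i.val = N - 1 then ([] : List L)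
         else (List.replicate (N - 2 - i.val) hγ).map (fun z : H => (z : L)) ++ [(h : L)]) := by
    intro i c
    have hi2 := i.2
    rw [List.append_cons]
    by_cases hc : i.val = N - 1
    · rw [if_pos hc, List.append_nil]
      apply List.ext_getElem
      · simp only [List.length_ofFn, List.length_append, List.length_map,
          List.length_replicate, List.length_cons, List.length_nil]
        omega
      · intro n hn hn'
        have hnN : n < N := by simpa using hn
        rw [List.getElem_ofFn]
        by_cases hni : n = i.val
        · have he : (⟨n, hnN⟩ : Fin N) = i := Fin.ext hni
          rw [he, Function.update_self,
            List.getElem_append_right (by simp [hni])]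
          simp [hni]
        · have hne : (⟨n, hnN⟩ : Fin N) ≠ i := fun hcon => hni (congrArg Fin.val hcon)
          rw [Function.update_of_ne hne, hxn n hnN, if_neg (by omega),
            List.getElem_append_left (by simp; omega)]
          simp
    · rw [if_neg hc]
      apply List.ext_getElem
      · simp only [List.length_ofFn, List.length_append, List.length_map,
          List.length_replicate, List.length_cons, List.length_nil]
        omega
      · intro n hn hn'
        have hnN : n < N := by simpa using hn
        rw [List.getElem_ofFn]
        by_cases hni : n = i.val
        · have he : (⟨n, hnN⟩ : Fin N) = i := Fin.ext hni
          rw [he, Function.update_self,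
            List.getElem_append_left (by simp; omega),
            List.getElem_append_right (by simp [hni])]
          simp [hni]
        · have hne : (⟨n, hnN⟩ : Fin N) ≠ i := fun hcon => hni (congrArg Fin.val hcon)
          rw [Function.update_of_ne hne, hxn n hnN]
          by_cases hlt : n < i.val
          · rw [List.getElem_append_left (by simp; omega),
              List.getElem_append_left (by simp; omega), if_neg (by omega)]
            simp
          · have hgt : i.val < n := by omega
            rw [List.getElem_append_right (by simp; omega)]
            by_cases hn1 : n = N - 1
            · rw [List.getElem_append_right (by simp; omega), if_pos hn1]
              simp
            · rw [List.getElem_append_left (by simp; omega), if_neg hn1]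
              simp
  have hprod : ∀ k : ℕ, ((List.replicate k hγ).map γ).prod = 1 := by
    intro k
    rw [List.map_replicate, hhγ, List.prod_replicate, one_pow]
  set iN1 : Fin N := ⟨N - 1, by omega⟩ with hiN1
  set iN2 : Fin N := ⟨N - 2, by omega⟩ with hiN2
  have hx1 : x iN1 = (h : L) := by rw [hiN1, hxn _ _, if_pos rfl]
  have hx2 : x iN2 = (hγ : L) := by rw [hiN2, hxn _ _, if_neg (by omega)]
  -- term at iN1
  have ht1 : itBracket (List.ofFn (Function.update x iN1 (φ (x iN1)))) = φ (h : L) := by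
    rw [hlist iN1 (φ (x iN1))]
    have hcv : (iN1 : Fin N).val = N - 1 := rfl
    rw [if_pos hcv, hx1]
    rw [itBracket_append_rootSp F H γ _ _ (by simp)
      (show itBracket [φ (h : L)] ∈ _ from hφγ h)]
    rw [hprod, one_smul]
    rfl
  -- term at iN2
  have ht2 : itBracket (List.ofFn (Function.update x iN2 (φ (x iN2)))) = -(γ h • φ (hγ : L)) := by
    rw [hlist iN2 (φ (x iN2))]
    have hcv : ¬ (iN2 : Fin N).val = N - 1 := by
      show ¬ N - 2 = N - 1; omega
    rw [if_neg hcv, hx2]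
    have hrep0 : N - 2 - (iN2 : Fin N).val = 0 := by
      show N - 2 - (N - 2) = 0; omega
    rw [hrep0]
    simp only [List.replicate_zero, List.map_nil, List.nil_append]
    have hbr2 : itBracket [φ (hγ : L), (h : L)] = -(γ h • φ (hγ : L)) := by
      show ⁅φ (hγ : L), (h : L)⁆ = _
      rw [← lie_skew, hbr h hγ]
    rw [itBracket_append_rootSp F H γ _ _ (by simp) (by
      rw [hbr2]; exact neg_mem (Submodule.smul_mem _ _ (hφγ hγ)))]
    rw [hprod, hbr2, one_smul]
  -- all other terms vanish
  have ht0 : ∀ i : Fin N, i ≠ iN1 → i ≠ iN2 →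
      itBracket (List.ofFn (Function.update x i (φ (x i)))) = 0 := by
    intro i hi1 hi2
    have hiv : i.val < N - 2 := by
      have h1 : i.val ≠ N - 1 := fun hcon => hi1 (Fin.ext hcon)
      have h2 : i.val ≠ N - 2 := fun hcon => hi2 (Fin.ext hcon)
      have := i.2; omega
    have htail : itBracket
        ((List.replicate (N - 2 - i.val) hγ).map (fun z : H => (z : L)) ++ [(h : L)]) = 0 := by
      apply itBracket_eq_zero_of_pairwise
      · simp only [List.length_append, List.length_map, List.length_replicate,
          List.length_cons, List.length_nil]
        omega
      · intro a ha b hb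
        rw [List.mem_append] at ha hb
        have hamem : ∃ a' : H, (a' : L) = a := by
          rcases ha with ha | ha
          · obtain ⟨a', -, rfl⟩ := List.mem_map.1 ha; exact ⟨a', rfl⟩
          · exact ⟨h, ((List.mem_singleton.1 ha).symm : (h : L) = a)⟩
        have hbmem : ∃ b' : H, (b' : L) = b := by
          rcases hb with hb | hb
          · obtain ⟨b', -, rfl⟩ := List.mem_map.1 hb; exact ⟨b', rfl⟩
          · exact ⟨h, ((List.mem_singleton.1 hb).symm : (h : L) = b)⟩
        obtain ⟨a', rfl⟩ := hamem
        obtain ⟨b', rfl⟩ := hbmem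
        exact habelian a' b'
    rw [hlist i (φ (x i)), if_neg (by omega)]
    apply itBracket_append_zero _ _ (by simp)
    rw [itBracket_cons _ _ (by simp), htail]
    simp
  -- compute the sum
  have hsum : ∑ i : Fin N, itBracket (List.ofFn (Function.update x i (φ (x i)))) =
      φ (h : L) + -(γ h • φ (hγ : L)) := by
    have hne : iN1 ≠ iN2 := by
      intro hcon
      have : N - 1 = N - 2 := congrArg Fin.val hcon
      omega
    rw [← Finset.add_sum_erase _ _ (Finset.mem_univ iN1),
      ← Finset.add_sum_erase _ _ (Finset.mem_erase.2 ⟨hne.symm, Finset.mem_univ iN2⟩),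
      ht1, ht2]
    rw [Finset.sum_eq_zero, add_zero]
    intro i hi
    rw [Finset.mem_erase, Finset.mem_erase] at hi
    exact ht0 i hi.2.1 hi.1
  rw [hsum] at key
  have hkey : φ (h : L) = γ h • φ (hγ : L) := by
    have h' := key.symm
    rwa [add_neg_eq_zero] at h'
  rw [hkey, ← lie_skew, hbr h hγ, neg_neg]
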